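/- arXiv:2511.01058 — 4 statements merged into one kernel-verified Lean document; each statement's English description precedes it below -/
import Mathlib

section
/- Let P be a transition kernel on a finite set X with stationary distribution π, let B ⊆ X, and suppose that for every x ∈ X and t ≥ 1 the conditional distributions P^t_x(·|B) and π(·|B) are both equal to the uniform distribution on B. Then for every x and t, ‖P^t_x − π‖_TV ≤ ‖P̄^t_{T(x)} − π̄‖_TV + π(X∖B), where T is the indicator-type lumping map x ↦ T(x) with {T = b_0} ⊇ B for some value b_0, P̄ the lumped kernel and π̄ the lumped stationary distribution. -/
/-!
On the fiber `B` both distributions are uniform, so `|P^t_x − π|` is constant on `B` and its sum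
over `B` is the single number `|P^t_x(B) − π(B)| = |P̄^t_{T x}(b₀) − π̄(b₀)|`, which the lumped
total variation distance dominates. Off `B`, `|P^t_x − π| ≤ P^t_x + π`, and since both measures
have mass one, `P^t_x(Bᶜ) + π(Bᶜ) = π(B) − P^t_x(B) + 2π(Bᶜ)`.
-/

open Finset

noncomputable def stepDist {X : Type*} [Fintype X] (P : X → X → ℝ) (μ : X → ℝ) : X → ℝ :=
  fun y => ∑ x, μ x * P x y

noncomputable def iterDist {X : Type*} [Fintype X] (P : X → X → ℝ) (μ : X → ℝ) (t : ℕ) :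
    X → ℝ := (stepDist P)^[t] μ

noncomputable def delta {X : Type*} [DecidableEq X] (x : X) : X → ℝ :=
  fun z => if z = x then 1 else 0

noncomputable def tvDist {X : Type*} [Fintype X] (μ ν : X → ℝ) : ℝ :=
  (1 / 2) * ∑ x, |μ x - ν x|

noncomputable def lumpDist {X Y : Type*} [Fintype X] [DecidableEq Y] (T : X → Y)
    (μ : X → ℝ) : Y → ℝ := fun y => ∑ x with T x = y, μ x

lemma delta_nonneg {X : Type*} [DecidableEq X] (x z : X) : 0 ≤ delta x z := by
  unfold delta; split_ifs <;> norm_num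

section Markov

variable {X : Type*} [Fintype X]

lemma sum_delta [DecidableEq X] (x : X) : ∑ z, delta x z = 1 := by
  simp [delta]

lemma sum_stepDist (P : X → X → ℝ) (hProw : ∀ x, ∑ y, P x y = 1) (μ : X → ℝ) :
    ∑ y, stepDist P μ y = ∑ x, μ x := by
  simp only [stepDist]
  rw [sum_comm]
  simp [← mul_sum, hProw]

lemma sum_iterDist (P : X → X → ℝ) (hProw : ∀ x, ∑ y, P x y = 1) (μ : X → ℝ) (t : ℕ) :
    ∑ y, iterDist P μ t y = ∑ x, μ x := by
  induction t with
  | zero => rfl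
  | succ n ih =>
    rw [iterDist, Function.iterate_succ_apply', sum_stepDist P hProw, ← ih, iterDist]

lemma stepDist_nonneg (P : X → X → ℝ) (hP : ∀ x y, 0 ≤ P x y) {μ : X → ℝ}
    (hμ : ∀ x, 0 ≤ μ x) (y : X) : 0 ≤ stepDist P μ y :=
  sum_nonneg fun x _ => mul_nonneg (hμ x) (hP x y)

lemma iterDist_nonneg (P : X → X → ℝ) (hP : ∀ x y, 0 ≤ P x y) {μ : X → ℝ}
    (hμ : ∀ x, 0 ≤ μ x) (t : ℕ) (y : X) : 0 ≤ iterDist P μ t y := by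
  induction t generalizing y with
  | zero => exact hμ y
  | succ n ih =>
    rw [iterDist, Function.iterate_succ_apply']
    exact stepDist_nonneg P hP ih y

end Markov

section Lumping

variable {X Y : Type*} [Fintype X] [DecidableEq Y]

lemma sum_lumpDist [Fintype Y] (T : X → Y) (μ : X → ℝ) : ∑ y, lumpDist T μ y = ∑ x, μ x :=
  sum_fiberwise univ T μ

lemma lumpDist_delta [DecidableEq X] (T : X → Y) (x : X) :
    lumpDist T (delta x) = delta (T x) := by
  funext y
  simp only [lumpDist, delta, sum_ite_eq', mem_filter, mem_univ, true_and]
  exact if_congr eq_comm rfl rfl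

lemma lumpDist_stepDist [Fintype Y] (P : X → X → ℝ) (T : X → Y) (Pbar : Y → Y → ℝ)
    (hlump : ∀ x y, (∑ x' with T x' = y, P x x') = Pbar (T x) y) (μ : X → ℝ) :
    lumpDist T (stepDist P μ) = stepDist Pbar (lumpDist T μ) := by
  funext y
  calc ∑ x' with T x' = y, ∑ x, μ x * P x x'
      = ∑ x, μ x * Pbar (T x) y := by
        rw [sum_comm]
        exact sum_congr rfl fun x _ => by rw [← mul_sum, hlump]
    _ = ∑ b, ∑ x with T x = b, μ x * Pbar b y := by
        rw [← sum_fiberwise univ T]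
        exact sum_congr rfl fun b _ => sum_congr rfl fun x hx => by rw [(mem_filter.1 hx).2]
    _ = ∑ b, lumpDist T μ b * Pbar b y := by simp only [lumpDist, sum_mul]

lemma lumpDist_iterDist [Fintype Y] (P : X → X → ℝ) (T : X → Y) (Pbar : Y → Y → ℝ)
    (hlump : ∀ x y, (∑ x' with T x' = y, P x x') = Pbar (T x) y) (μ : X → ℝ) (t : ℕ) :
    lumpDist T (iterDist P μ t) = iterDist Pbar (lumpDist T μ) t := by
  induction t with
  | zero => rfl
  | succ n ih =>
    rw [iterDist, Function.iterate_succ_apply', lumpDist_stepDist P T Pbar hlump, ← iterDist, ih,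
      iterDist, iterDist, Function.iterate_succ_apply']

end Lumping

section TotalVariation

variable {X : Type*} [Fintype X]

lemma abs_sub_le_tvDist [DecidableEq X] {μ ν : X → ℝ} (hmass : ∑ x, μ x = ∑ x, ν x) (y : X) :
    |μ y - ν y| ≤ tvDist μ ν := by
  have hrest : ∑ x ∈ univ.erase y, (μ x - ν x) = -(μ y - ν y) := by
    have htotal : ∑ x, (μ x - ν x) = 0 := by rw [sum_sub_distrib, hmass, sub_self]
    rw [← add_sum_erase univ _ (mem_univ y)] at htotal
    linarith
  have hrest_abs : |μ y - ν y| ≤ ∑ x ∈ univ.erase y, |μ x - ν x| := by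
    rw [← abs_neg, ← hrest]
    exact abs_sum_le_sum_abs _ _
  rw [tvDist, ← add_sum_erase univ (fun x => |μ x - ν x|) (mem_univ y)]
  linarith

lemma sum_abs_sub_eq_of_uniform {ι : Type*} (B : Finset ι) {f g : ι → ℝ}
    (hf : ∀ b ∈ B, f b = (∑ b' ∈ B, f b') / #B) (hg : ∀ b ∈ B, g b = (∑ b' ∈ B, g b') / #B) :
    ∑ b ∈ B, |f b - g b| = |∑ b ∈ B, f b - ∑ b ∈ B, g b| := by
  rcases B.eq_empty_or_nonempty with rfl | hBne
  · simp
  have hcard : (0 : ℝ) < #B := by exact_mod_cast hBne.card_pos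
  have hconst : ∀ b ∈ B, |f b - g b| = |∑ b ∈ B, f b - ∑ b ∈ B, g b| / #B := fun b hb => by
    rw [hf b hb, hg b hb, div_sub_div_same, abs_div, abs_of_pos hcard]
  rw [sum_congr rfl hconst, sum_const, nsmul_eq_mul]
  field_simp

lemma tvDist_le_of_uniform_on [DecidableEq X] {μ ν : X → ℝ} (hμ : ∀ x, 0 ≤ μ x) (hν : ∀ x, 0 ≤ ν x)
    (hmass : ∑ x, μ x = ∑ x, ν x) (B : Finset X)
    (hμB : ∀ b ∈ B, μ b = (∑ b' ∈ B, μ b') / #B) (hνB : ∀ b ∈ B, ν b = (∑ b' ∈ B, ν b') / #B) :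
    tvDist μ ν ≤ |∑ b ∈ B, μ b - ∑ b ∈ B, ν b| + ∑ b ∈ Bᶜ, ν b := by
  have hcompl : ∑ b ∈ Bᶜ, |μ b - ν b| ≤ ∑ b ∈ Bᶜ, μ b + ∑ b ∈ Bᶜ, ν b := by
    rw [← sum_add_distrib]
    refine sum_le_sum fun b _ => abs_sub_le_iff.2 ⟨?_, ?_⟩ <;> linarith [hμ b, hν b]
  have hmass_split := sum_add_sum_compl B μ
  rw [hmass, ← sum_add_sum_compl B ν] at hmass_split
  rw [tvDist, ← sum_add_sum_compl B, sum_abs_sub_eq_of_uniform B hμB hνB]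
  linarith [neg_abs_le (∑ b ∈ B, μ b - ∑ b ∈ B, ν b)]

end TotalVariation

theorem stmt_6_general {X Y : Type*} [Fintype X] [DecidableEq X] [Fintype Y] [DecidableEq Y]
    (P : X → X → ℝ) (hPnonneg : ∀ x y, 0 ≤ P x y) (hProw : ∀ x, ∑ y, P x y = 1)
    (π : X → ℝ) (hπnonneg : ∀ x, 0 ≤ π x) (hπsum : ∑ x, π x = 1)
    (T : X → Y) (Pbar : Y → Y → ℝ)
    (hlump : ∀ x y, (∑ x' with T x' = y, P x x') = Pbar (T x) y)
    (b₀ : Y) (B : Finset X) (hB : B = univ.filter (fun x => T x = b₀))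
    (hcondP : ∀ (x : X) (t : ℕ), 1 ≤ t → ∀ b ∈ B,
      iterDist P (delta x) t b = (∑ b' ∈ B, iterDist P (delta x) t b') / B.card)
    (hcondπ : ∀ b ∈ B, π b = (∑ b' ∈ B, π b') / B.card)
    (x : X) (t : ℕ) (ht : 1 ≤ t) :
    tvDist (iterDist P (delta x) t) π ≤
      tvDist (iterDist Pbar (delta (T x)) t) (lumpDist T π) + ∑ b ∈ Bᶜ, π b := by
  set μ := iterDist P (delta x) t
  have hmass : ∑ y, μ y = ∑ y, π y := by rw [sum_iterDist P hProw, sum_delta, hπsum]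
  have hμ_lump : lumpDist T μ = iterDist Pbar (delta (T x)) t := by
    rw [lumpDist_iterDist P T Pbar hlump, lumpDist_delta]
  have hfiber : ∀ ν : X → ℝ, ∑ b ∈ B, ν b = lumpDist T ν b₀ := fun ν => by rw [hB, lumpDist]
  calc tvDist μ π ≤ |∑ b ∈ B, μ b - ∑ b ∈ B, π b| + ∑ b ∈ Bᶜ, π b :=
        tvDist_le_of_uniform_on (iterDist_nonneg P hPnonneg (delta_nonneg x) t) hπnonneg hmass B
          (hcondP x t ht) hcondπ
    _ = |lumpDist T μ b₀ - lumpDist T π b₀| + ∑ b ∈ Bᶜ, π b := by rw [hfiber, hfiber]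
    _ ≤ _ := by
        rw [← hμ_lump]
        gcongr
        exact abs_sub_le_tvDist (by rw [sum_lumpDist, sum_lumpDist, hmass]) b₀

/-- If the conditional distributions of `P^t_x` and of `π` given the lumping fiber
`B = T⁻¹(b₀)` are both uniform on `B`, then
`‖P^t_x − π‖_TV ≤ ‖P̄^t_{T x} − π̄‖_TV + π(Bᶜ)`. -/
theorem stmt_6 {X Y : Type*} [Fintype X] [DecidableEq X] [Fintype Y] [DecidableEq Y]
    (P : X → X → ℝ) (hPnonneg : ∀ x y, 0 ≤ P x y) (hProw : ∀ x, ∑ y, P x y = 1)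
    (π : X → ℝ) (hπnonneg : ∀ x, 0 ≤ π x) (hπsum : ∑ x, π x = 1)
    (hπstat : stepDist P π = π)
    (T : X → Y) (Pbar : Y → Y → ℝ)
    (hlump : ∀ x y, (∑ x' with T x' = y, P x x') = Pbar (T x) y)
    (b₀ : Y) (B : Finset X) (hB : B = univ.filter (fun x => T x = b₀)) (hBne : B.Nonempty)
    (hcondP : ∀ (x : X) (t : ℕ), 1 ≤ t → ∀ b ∈ B,
      iterDist P (delta x) t b = (∑ b' ∈ B, iterDist P (delta x) t b') / B.card)
    (hcondπ : ∀ b ∈ B, π b = (∑ b' ∈ B, π b') / B.card)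
    (x : X) (t : ℕ) (ht : 1 ≤ t) :
    tvDist (iterDist P (delta x) t) π ≤
      tvDist (iterDist Pbar (delta (T x)) t) (lumpDist T π) + ∑ b ∈ Bᶜ, π b :=
  stmt_6_general P hPnonneg hProw π hπnonneg hπsum T Pbar hlump b₀ B hB hcondP hcondπ x t ht
end

section
/- Define Γ_{j,a} = ((k−j)p)! · j! · C(k,j)² · (p(p−1))^j · C(j, 2k−a) for integers 2k−a ≤ j ≤ k, where p ≥ 3 is prime, k < p, and k ≤ a ≤ 2k. Then the sequence (Γ_{j,a})_{j=2k−a}^{k} is non-increasing in j, and consequently the alternating sum f(a;k) = p^{−a} Σ_{j=2k−a}^{k} (−1)^{j−(2k−a)} Γ_{j,a} satisfies 0 ≤ f(a;k) ≤ p^{−a} Γ_{2k−a,a} = p^{−a} ((a−k)p)! (2k−a)! C(k,2k−a)² (p(p−1))^{2k−a}. -/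
/-! Writing `q = k − j`, the ratio `Γ_{j+1,a} / Γ_{j,a}` equals
`q² p (p−1) / ((j+1−(2k−a)) · (qp)! / ((q−1)p)!)`, and `(qp)! / ((q−1)p)!` contains the factors
`qp · (qp−1) ≥ q² p (p−1)`, so the ratio is at most `1`. The partial sums of an alternating sum of a
non-increasing nonnegative sequence stay between `0` and its first term. -/

open Finset

/-- `Γ_{j,a} = ((k−j)p)! · j! · C(k,j)² · (p(p−1))^j · C(j, 2k−a)`. -/
def Gam (p k a j : ℕ) : ℕ :=
  ((k - j) * p).factorial * j.factorial * (Nat.choose k j) ^ 2 *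
    (p * (p - 1)) ^ j * Nat.choose j (2 * k - a)

open Nat

theorem Nat.factorial_mul_sq_mul_le_factorial (p q : ℕ) :
    (q * p)! * ((q + 1) ^ 2 * (p * (p - 1))) ≤ ((q + 1) * p)! := by
  rcases p with _ | _ | r
  · simp
  · simp
  set n := q * (r + 2)
  have hfac : ((q + 1) * (r + 2))! = (n + r + 2) * (n + r + 1) * (n + r)! := by
    rw [show (q + 1) * (r + 2) = n + r + 2 by ring, factorial_succ, factorial_succ]
    ring
  have hfactors : (q + 1) ^ 2 * ((r + 2) * (r + 2 - 1)) ≤ (n + r + 2) * (n + r + 1) := by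
    rw [show r + 2 - 1 = r + 1 by omega,
      show (q + 1) ^ 2 * ((r + 2) * (r + 1)) = (n + r + 2) * ((q + 1) * (r + 1)) by ring]
    exact Nat.mul_le_mul_left _ (by simp only [n]; nlinarith)
  rw [hfac, mul_comm]
  exact Nat.mul_le_mul hfactors (factorial_le (by omega))

theorem Gam_succ_le (p k a j : ℕ) (hj : 2 * k - a ≤ j) (hjk : j < k) :
    Gam p k a (j + 1) ≤ Gam p k a j := by
  set m := 2 * k - a
  obtain ⟨q, hq⟩ : ∃ q, k - j = q + 1 := ⟨k - j - 1, by omega⟩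
  have hq' : k - (j + 1) = q := by omega
  have hk_choose : choose k (j + 1) * (j + 1) = choose k j * (q + 1) := by
    rw [choose_succ_right_eq, hq]
  have hj_choose : choose j m * (j + 1) = choose (j + 1) m * (j + 1 - m) := choose_mul_succ_eq j m
  set X := j ! * choose k j ^ 2 * (p * (p - 1)) ^ j * choose j m * (j + 1)
  -- the factor `(j + 1) * (j + 1 - m)` clears the denominators of the binomial ratios
  have hsucc : Gam p k a (j + 1) * ((j + 1) * (j + 1 - m)) =
      X * ((q * p)! * ((q + 1) ^ 2 * (p * (p - 1)))) :=
    calc Gam p k a (j + 1) * ((j + 1) * (j + 1 - m))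
        = (q * p)! * j ! * (choose k (j + 1) * (j + 1)) ^ 2 * (p * (p - 1)) ^ j *
            (p * (p - 1)) * (choose (j + 1) m * (j + 1 - m)) := by
          rw [Gam, hq', factorial_succ]; ring
      _ = X * ((q * p)! * ((q + 1) ^ 2 * (p * (p - 1)))) := by
          rw [hk_choose, ← hj_choose]; ring
  have hself : Gam p k a j * ((j + 1) * (j + 1 - m)) = X * (((q + 1) * p)! * (j + 1 - m)) := by
    rw [Gam, hq]; ring
  refine Nat.le_of_mul_le_mul_right ?_
    (Nat.mul_pos j.succ_pos (Nat.sub_pos_of_lt (Nat.lt_succ_of_le hj)))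
  rw [hsucc, hself]
  refine Nat.mul_le_mul_left _ ?_
  calc (q * p)! * ((q + 1) ^ 2 * (p * (p - 1)))
      ≤ ((q + 1) * p)! := factorial_mul_sq_mul_le_factorial p q
    _ ≤ ((q + 1) * p)! * (j + 1 - m) := Nat.le_mul_of_pos_right _ (by omega)

section AlternatingSum

variable {R : Type*} [CommRing R] [LinearOrder R] [IsStrictOrderedRing R]

theorem alternating_sum_range_nonneg_and_le (g : ℕ → R) (N : ℕ) (hg : ∀ i, 0 ≤ g i)
    (hanti : ∀ i < N, g (i + 1) ≤ g i) :
    0 ≤ ∑ i ∈ range (N + 1), (-1) ^ i * g i ∧ ∑ i ∈ range (N + 1), (-1) ^ i * g i ≤ g 0 := by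
  induction N generalizing g with
  | zero => simpa using hg 0
  | succ N ih =>
    obtain ⟨htail_nonneg, htail_le⟩ :=
      ih (fun i => g (i + 1)) (fun i => hg _) (fun i hi => hanti (i + 1) (by omega))
    have hsplit : ∑ i ∈ range (N + 2), (-1) ^ i * g i =
        g 0 - ∑ i ∈ range (N + 1), (-1) ^ i * g (i + 1) := by
      rw [sum_range_succ', sub_eq_add_neg, add_comm, ← sum_neg_distrib]
      simp [pow_succ]
    have h10 : g 1 ≤ g 0 := hanti 0 (by omega)
    rw [hsplit]
    constructor <;> linarith

theorem alternating_sum_Icc_nonneg_and_le (g : ℕ → R) (m n : ℕ) (hg : ∀ i, 0 ≤ g i)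
    (hanti : ∀ i, m ≤ i → i < n → g (i + 1) ≤ g i) :
    0 ≤ ∑ i ∈ Icc m n, (-1) ^ (i - m) * g i ∧ ∑ i ∈ Icc m n, (-1) ^ (i - m) * g i ≤ g m := by
  rcases lt_or_ge n m with hnm | hmn
  · simpa [Icc_eq_empty_of_lt hnm] using hg m
  have hshift : ∑ i ∈ Icc m n, (-1) ^ (i - m) * g i =
      ∑ i ∈ range (n - m + 1), (-1) ^ i * g (m + i) := by
    rw [← Ico_add_one_right_eq_Icc, sum_Ico_eq_sum_range, show n + 1 - m = n - m + 1 by omega]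
    simp
  simpa [hshift] using alternating_sum_range_nonneg_and_le (fun i => g (m + i)) (n - m)
    (fun i => hg _) (fun i hi => hanti (m + i) (by omega) (by omega))

end AlternatingSum

theorem Nat.cast_mul_sub_one {R : Type*} [Ring R] (p : ℕ) :
    ((p * (p - 1) : ℕ) : R) = p * (p - 1) := by
  rcases p with _ | p <;> simp

theorem stmt_14_general (p k a : ℕ)
    (ha : a ≤ 2 * k) :
    (∀ j, 2 * k - a ≤ j → j < k → Gam p k a (j + 1) ≤ Gam p k a j) ∧
    (0 ≤ (1 / (p : ℝ) ^ a) *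
        ∑ j ∈ Finset.Icc (2 * k - a) k, (-1 : ℝ) ^ (j - (2 * k - a)) * (Gam p k a j : ℝ)) ∧
    ((1 / (p : ℝ) ^ a) *
        ∑ j ∈ Finset.Icc (2 * k - a) k, (-1 : ℝ) ^ (j - (2 * k - a)) * (Gam p k a j : ℝ)) ≤
      (1 / (p : ℝ) ^ a) * (Gam p k a (2 * k - a) : ℝ) ∧
    (Gam p k a (2 * k - a) : ℝ) =
      (((a - k) * p).factorial : ℝ) * ((2 * k - a).factorial : ℝ) *
        (Nat.choose k (2 * k - a) : ℝ) ^ 2 * ((p : ℝ) * ((p : ℝ) - 1)) ^ (2 * k - a) := by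
  obtain ⟨hsum_nonneg, hsum_le⟩ := alternating_sum_Icc_nonneg_and_le
    (fun j => (Gam p k a j : ℝ)) (2 * k - a) k (fun j => Nat.cast_nonneg _)
    (fun j hj hjk => by exact_mod_cast Gam_succ_le p k a j hj hjk)
  have hscale : (0 : ℝ) ≤ 1 / (p : ℝ) ^ a := by positivity
  refine ⟨Gam_succ_le p k a, mul_nonneg hscale hsum_nonneg,
    mul_le_mul_of_nonneg_left hsum_le hscale, ?_⟩
  rw [Gam, choose_self, mul_one, show k - (2 * k - a) = a - k by omega, Nat.cast_mul,
    Nat.cast_pow, Nat.cast_mul_sub_one]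
  push_cast
  ring

/-- The sequence `Γ_{j,a}` is non-increasing for `2k−a ≤ j ≤ k`, hence the alternating sum
`f(a;k) = p^{−a} Σ_j (−1)^{j−(2k−a)} Γ_{j,a}` satisfies
`0 ≤ f(a;k) ≤ p^{−a} Γ_{2k−a,a} = p^{−a}((a−k)p)!(2k−a)!C(k,2k−a)²(p(p−1))^{2k−a}`. -/
theorem stmt_14 (p k a : ℕ) (hp : p.Prime) (hp3 : 3 ≤ p) (hk : k < p)
    (hak : k ≤ a) (ha : a ≤ 2 * k) :
    (∀ j, 2 * k - a ≤ j → j < k → Gam p k a (j + 1) ≤ Gam p k a j) ∧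
    (0 ≤ (1 / (p : ℝ) ^ a) *
        ∑ j ∈ Finset.Icc (2 * k - a) k, (-1 : ℝ) ^ (j - (2 * k - a)) * (Gam p k a j : ℝ)) ∧
    ((1 / (p : ℝ) ^ a) *
        ∑ j ∈ Finset.Icc (2 * k - a) k, (-1 : ℝ) ^ (j - (2 * k - a)) * (Gam p k a j : ℝ)) ≤
      (1 / (p : ℝ) ^ a) * (Gam p k a (2 * k - a) : ℝ) ∧
    (Gam p k a (2 * k - a) : ℝ) =
      (((a - k) * p).factorial : ℝ) * ((2 * k - a).factorial : ℝ) *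
        (Nat.choose k (2 * k - a) : ℝ) ^ 2 * ((p : ℝ) * ((p : ℝ) - 1)) ^ (2 * k - a) :=
  stmt_14_general p k a ha
end

section
/- Let n_1 = p−1, n_2 = ((p−1)! − (p−1))/p for p ≥ 5 prime, and let P be the p!×p! stochastic matrix indexed by S_p given by: P(σ,τ) = 1/p! if σ lies in a 'large' class, P(σ,τ) = 1/(p·p!) if σ lies in a 'small' class and τ is not in the same small class as σ, and P(σ,τ) = (p−1)/p² + 1/(p·p!) if σ and τ lie in the same small class; here S_p is partitioned into n_1 small classes each of size p and a large set B of size p²n_2. Then P has exactly the eigenvalues 1, 1−1/p, 1−1/p−(p−1)/(p(p−2)!), and 0, with multiplicities 1, n_1−1, 1, and p!−n_1−1 respectively, and P is diagonalizable. -/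
open Finset

/-- The `k = 1` Sylow–Burnside transition matrix on `S_p`, described via a class-label
function `cls` (labels `0,…,n₁−1` are the small classes, label `n₁` is the large set). -/
noncomputable def burnsideMatrix (p : ℕ) (cls : Equiv.Perm (Fin p) → ℕ) :
    Matrix (Equiv.Perm (Fin p)) (Equiv.Perm (Fin p)) ℝ := fun σ τ =>
  if cls σ = p - 1 then 1 / (Nat.factorial p : ℝ)
  else if cls σ = cls τ then ((p : ℝ) - 1) / (p : ℝ) ^ 2 + 1 / ((p : ℝ) * (Nat.factorial p : ℝ))
  else 1 / ((p : ℝ) * (Nat.factorial p : ℝ))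


set_option linter.unusedSectionVars false
set_option maxHeartbeats 1000000

namespace B17

def n2 (p : ℕ) : ℕ := ((p - 1).factorial - (p - 1)) / p

variable {p : ℕ} {cls : Equiv.Perm (Fin p) → ℕ} {r : ℕ → Equiv.Perm (Fin p)}

lemma wilson_dvd (hp : p.Prime) (hp5 : 5 ≤ p) : p ∣ (p - 1).factorial - (p - 1) := by
  haveI : Fact p.Prime := ⟨hp⟩
  have h1 : ((p - 1).factorial : ZMod p) = -1 := ZMod.wilsons_lemma p
  have hle : (p - 1) ≤ (p - 1).factorial := Nat.self_le_factorial _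
  have h2 : (((p - 1).factorial - (p - 1) : ℕ) : ZMod p) = 0 := by
    push_cast [hle]
    rw [h1]
    have : ((p - 1 : ℕ) : ZMod p) = -1 := by
      have hp' : ((p : ℕ) : ZMod p) = 0 := ZMod.natCast_self p
      push_cast [show 1 ≤ p by omega]
      rw [hp']; ring
    rw [this]; ring
  exact (ZMod.natCast_eq_zero_iff _ _).mp h2

lemma n2_mul (hp : p.Prime) (hp5 : 5 ≤ p) : p * n2 p = (p - 1).factorial - (p - 1) :=
  Nat.mul_div_cancel' (wilson_dvd hp hp5)

lemma n2_pos (hp : p.Prime) (hp5 : 5 ≤ p) : 0 < n2 p := by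
  have h := n2_mul hp hp5
  have : p - 1 < (p - 1).factorial := Nat.lt_factorial_self (by omega)
  rcases Nat.eq_zero_or_pos (n2 p) with h0 | h0
  · rw [h0, mul_zero] at h; omega
  · exact h0

lemma factm1 (hp5 : 5 ≤ p) : (p - 1).factorial = (p - 1) * (p - 2).factorial := by
  have h : p - 1 = (p - 2) + 1 := by omega
  rw [h, Nat.factorial_succ]

lemma factp (hp5 : 5 ≤ p) : p.factorial = p * ((p - 1) * (p - 2).factorial) := by
  have h : p = (p - 1) + 1 := by omega
  rw [← factm1 hp5]
  conv_lhs => rw [h, Nat.factorial_succ, ← h]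

lemma factp_real (hp5 : 5 ≤ p) :
    (p.factorial : ℝ) = (p : ℝ) * (((p : ℝ) - 1) * ((p - 2).factorial : ℝ)) := by
  rw [factp hp5]
  push_cast [show 1 ≤ p by omega]
  ring

lemma n2_real (hp : p.Prime) (hp5 : 5 ≤ p) :
    (n2 p : ℝ) = (((p : ℝ) - 1) * ((p - 2).factorial : ℝ) - ((p : ℝ) - 1)) / (p : ℝ) := by
  have h := n2_mul hp hp5
  have hle : (p - 1) ≤ (p - 1).factorial := Nat.self_le_factorial _
  have hc : ((p : ℝ)) * (n2 p : ℝ) = ((p - 1).factorial : ℝ) - ((p : ℝ) - 1) := by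
    rw [← Nat.cast_mul, h]
    push_cast [hle, show 1 ≤ p by omega]
    ring
  have hp0 : (p : ℝ) ≠ 0 := by positivity
  rw [factm1 hp5] at hc
  push_cast [show 1 ≤ p by omega] at hc
  field_simp
  linarith [hc]

noncomputable def col (p : ℕ) (cls : Equiv.Perm (Fin p) → ℕ) (r : ℕ → Equiv.Perm (Fin p))
    (τ σ : Equiv.Perm (Fin p)) : ℝ :=
  if τ = r 0 then 1
  else if τ = r (p - 1) then (if cls σ = p - 1 then 1 - (p : ℝ) else (n2 p : ℝ))
  else if τ = r (cls τ) then (if cls σ = cls τ then 1 else if cls σ = 0 then -1 else 0)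
  else (if σ = τ then 1 else 0) - (if σ = r (cls τ) then 1 else 0)

noncomputable def ev (p : ℕ) (cls : Equiv.Perm (Fin p) → ℕ) (r : ℕ → Equiv.Perm (Fin p))
    (τ : Equiv.Perm (Fin p)) : ℝ :=
  if τ = r 0 then 1
  else if τ = r (p - 1) then 1 - 1 / (p : ℝ) - ((p : ℝ) - 1) / ((p : ℝ) * ((p - 2).factorial : ℝ))
  else if τ = r (cls τ) then 1 - 1 / (p : ℝ)
  else 0

def cl (p : ℕ) (cls : Equiv.Perm (Fin p) → ℕ) (j : ℕ) : Finset (Equiv.Perm (Fin p)) :=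
  univ.filter (fun σ => cls σ = j)

section
variable (hp5 : 5 ≤ p) (hr : ∀ j < p, cls (r j) = j)
include hp5 hr

lemma rinj {i j : ℕ} (hi : i < p) (hj : j < p) (h : r i = r j) : i = j := by
  have := hr i hi; have := hr j hj
  rw [h] at *; omega

lemma col_r0 (σ : Equiv.Perm (Fin p)) : col p cls r (r 0) σ = 1 := by
  rw [col, if_pos rfl]

lemma col_rB (σ : Equiv.Perm (Fin p)) :
    col p cls r (r (p - 1)) σ = if cls σ = p - 1 then 1 - (p : ℝ) else (n2 p : ℝ) := by
  rw [col, if_neg, if_pos rfl]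
  intro h
  have := rinj hp5 hr (by omega) (by omega) h
  omega

lemma col_mid {i : ℕ} (hi : 0 < i) (hi' : i < p - 1) (σ : Equiv.Perm (Fin p)) :
    col p cls r (r i) σ = (if cls σ = i then 1 else if cls σ = 0 then -1 else 0) := by
  have hcl : cls (r i) = i := hr i (by omega)
  rw [col, if_neg, if_neg, if_pos (by rw [hcl]), hcl]
  · intro h; have := rinj hp5 hr (by omega) (by omega) h; omega
  · intro h; have := rinj hp5 hr (by omega) (by omega) h; omega

lemma nonrep_ne_r0 {τ : Equiv.Perm (Fin p)} (h : τ ≠ r (cls τ)) : τ ≠ r 0 := by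
  intro h0
  exact h (by rw [h0, hr 0 (by omega)])

lemma nonrep_ne_rB {τ : Equiv.Perm (Fin p)} (h : τ ≠ r (cls τ)) : τ ≠ r (p - 1) := by
  intro h0
  exact h (by rw [h0, hr (p - 1) (by omega)])

lemma col_nonrep {τ : Equiv.Perm (Fin p)} (h : τ ≠ r (cls τ)) (σ : Equiv.Perm (Fin p)) :
    col p cls r τ σ = (if σ = τ then 1 else 0) - (if σ = r (cls τ) then 1 else 0) := by
  rw [col, if_neg (nonrep_ne_r0 hp5 hr h), if_neg (nonrep_ne_rB hp5 hr h), if_neg h]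

lemma ev_r0 : ev p cls r (r 0) = 1 := by rw [ev, if_pos rfl]

lemma ev_rB : ev p cls r (r (p - 1)) =
    1 - 1 / (p : ℝ) - ((p : ℝ) - 1) / ((p : ℝ) * ((p - 2).factorial : ℝ)) := by
  rw [ev, if_neg, if_pos rfl]
  intro h; have := rinj hp5 hr (by omega) (by omega) h; omega

lemma ev_mid {i : ℕ} (hi : 0 < i) (hi' : i < p - 1) : ev p cls r (r i) = 1 - 1 / (p : ℝ) := by
  have hcl : cls (r i) = i := hr i (by omega)
  rw [ev, if_neg, if_neg, if_pos (by rw [hcl])]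
  · intro h; have := rinj hp5 hr (by omega) (by omega) h; omega
  · intro h; have := rinj hp5 hr (by omega) (by omega) h; omega

lemma ev_nonrep {τ : Equiv.Perm (Fin p)} (h : τ ≠ r (cls τ)) : ev p cls r τ = 0 := by
  rw [ev, if_neg (nonrep_ne_r0 hp5 hr h), if_neg (nonrep_ne_rB hp5 hr h), if_neg h]

end

section
variable (hp5 : 5 ≤ p) (hcls : ∀ σ, cls σ ≤ p - 1)
include hp5 hcls

lemma sum_classes (f : Equiv.Perm (Fin p) → ℝ) :
    ∑ σ, f σ = ∑ j ∈ range p, ∑ σ ∈ cl p cls j, f σ :=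
  (Finset.sum_fiberwise_of_maps_to (fun σ _ => mem_range.mpr (by have := hcls σ; omega)) f).symm

lemma range_split (f : ℕ → ℝ) :
    ∑ j ∈ range p, f j = f 0 + f (p - 1) + ∑ j ∈ Ioo 0 (p - 1), f j := by
  have he : range p = insert 0 (insert (p - 1) (Ioo 0 (p - 1))) := by
    ext x; simp only [mem_range, mem_insert, mem_Ioo]; omega
  rw [he, sum_insert (by simp only [mem_insert, mem_Ioo]; omega),
    sum_insert (by simp only [mem_Ioo]; omega)]
  ring

end

lemma sum_cl_eq_const (j : ℕ) (f : Equiv.Perm (Fin p) → ℝ) (c : ℝ)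
    (h : ∀ σ, cls σ = j → f σ = c) :
    ∑ σ ∈ cl p cls j, f σ = ((cl p cls j).card : ℝ) * c := by
  rw [Finset.sum_congr rfl (fun σ hσ => h σ (by simpa [cl] using hσ)), sum_const,
    nsmul_eq_mul]

lemma sum_cl_ind (j : ℕ) (τ : Equiv.Perm (Fin p)) :
    ∑ σ ∈ cl p cls j, (if σ = τ then (1 : ℝ) else 0) = if cls τ = j then 1 else 0 := by
  rw [Finset.sum_ite_eq' (cl p cls j) τ (fun _ => (1 : ℝ))]
  simp [cl]

lemma P_row (hp5 : 5 ≤ p) (σ : Equiv.Perm (Fin p)) (v : Equiv.Perm (Fin p) → ℝ) :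
    ∑ τ, burnsideMatrix p cls σ τ * v τ =
      if cls σ = p - 1 then (∑ τ, v τ) / (p.factorial : ℝ)
      else (∑ τ, v τ) / ((p : ℝ) * (p.factorial : ℝ)) +
        (((p : ℝ) - 1) / (p : ℝ) ^ 2) * ∑ τ ∈ cl p cls (cls σ), v τ := by
  by_cases h : cls σ = p - 1
  · rw [if_pos h]
    rw [Finset.sum_congr rfl (fun τ (_ : τ ∈ univ) =>
      by rw [show burnsideMatrix p cls σ τ = 1 / (p.factorial : ℝ) from if_pos h])]
    rw [← Finset.mul_sum, one_div_mul_eq_div]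
  · rw [if_neg h]
    have hsplit : ∀ τ, burnsideMatrix p cls σ τ * v τ =
        (1 / ((p : ℝ) * (p.factorial : ℝ))) * v τ +
        (if cls τ = cls σ then (((p : ℝ) - 1) / (p : ℝ) ^ 2) * v τ else 0) := by
      intro τ
      rw [show burnsideMatrix p cls σ τ = if cls σ = cls τ then ((p : ℝ) - 1) / (p : ℝ) ^ 2 + 1 / ((p : ℝ) * (Nat.factorial p : ℝ)) else 1 / ((p : ℝ) * (Nat.factorial p : ℝ)) from if_neg h]
      by_cases h2 : cls σ = cls τ
      · rw [if_pos h2, if_pos h2.symm]; ring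
      · rw [if_neg h2, if_neg (fun hh => h2 hh.symm)]; ring
    rw [Finset.sum_congr rfl (fun τ _ => hsplit τ), Finset.sum_add_distrib, ← Finset.mul_sum,
      ← Finset.sum_filter, ← Finset.mul_sum]
    rw [show (univ.filter fun τ => cls τ = cls σ) = cl p cls (cls σ) from rfl,
      one_div_mul_eq_div]

end B17

namespace B17

variable {p : ℕ} {cls : Equiv.Perm (Fin p) → ℕ} {r : ℕ → Equiv.Perm (Fin p)}

section
variable (hp : p.Prime) (hp5 : 5 ≤ p) (hcls : ∀ σ, cls σ ≤ p - 1)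
  (hr : ∀ j < p, cls (r j) = j)
  (hsmall : ∀ i < p - 1, (Finset.univ.filter (fun σ => cls σ = i)).card = p)
  (hbig : (Finset.univ.filter (fun σ : Equiv.Perm (Fin p) => cls σ = p - 1)).card =
      p ^ 2 * (((p - 1).factorial - (p - 1)) / p))
include hp hp5 hcls hr hsmall hbig

lemma card_cl_small {j : ℕ} (hj : j < p - 1) : (cl p cls j).card = p := hsmall j hj

lemma card_cl_big : (cl p cls (p - 1)).card = p ^ 2 * n2 p := hbig

lemma scl_r0 (j : ℕ) : ∑ σ ∈ cl p cls j, col p cls r (r 0) σ = ((cl p cls j).card : ℝ) := by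
  rw [sum_cl_eq_const j _ 1 (fun σ _ => col_r0 hp5 hr σ), mul_one]

lemma scl_rB (j : ℕ) : ∑ σ ∈ cl p cls j, col p cls r (r (p - 1)) σ =
    ((cl p cls j).card : ℝ) * (if j = p - 1 then 1 - (p : ℝ) else (n2 p : ℝ)) := by
  refine sum_cl_eq_const j _ _ (fun σ hσ => ?_)
  rw [col_rB hp5 hr σ, hσ]

lemma scl_mid {i : ℕ} (hi : 0 < i) (hi' : i < p - 1) (j : ℕ) :
    ∑ σ ∈ cl p cls j, col p cls r (r i) σ =
    ((cl p cls j).card : ℝ) * (if j = i then 1 else if j = 0 then -1 else 0) := by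
  refine sum_cl_eq_const j _ _ (fun σ hσ => ?_)
  rw [col_mid hp5 hr hi hi' σ, hσ]

lemma scl_nonrep {τ : Equiv.Perm (Fin p)} (h : τ ≠ r (cls τ)) (j : ℕ) :
    ∑ σ ∈ cl p cls j, col p cls r τ σ = 0 := by
  rw [Finset.sum_congr rfl (fun σ _ => col_nonrep hp5 hr h σ), Finset.sum_sub_distrib,
    sum_cl_ind j τ, sum_cl_ind j (r (cls τ)), hr (cls τ) (by have := hcls τ; omega), sub_self]

lemma tot_r0 : ∑ σ, col p cls r (r 0) σ = (p : ℝ) * ((p : ℝ) - 1) + (p : ℝ) ^ 2 * (n2 p : ℝ) := by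
  rw [sum_classes hp5 hcls, range_split hp5 hcls]
  rw [scl_r0 hp hp5 hcls hr hsmall hbig 0, scl_r0 hp hp5 hcls hr hsmall hbig (p - 1),
    card_cl_small hp hp5 hcls hr hsmall hbig (by omega : 0 < p - 1),
    card_cl_big hp hp5 hcls hr hsmall hbig]
  rw [Finset.sum_congr rfl (fun j hj => by
    rw [scl_r0 hp hp5 hcls hr hsmall hbig j,
      card_cl_small hp hp5 hcls hr hsmall hbig (mem_Ioo.mp hj).2])]
  rw [sum_const, Nat.card_Ioo, show p - 1 - 0 - 1 = p - 2 from by omega, nsmul_eq_mul]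
  push_cast [show 1 ≤ p by omega, show 2 ≤ p by omega]
  ring

lemma tot_rB : ∑ σ, col p cls r (r (p - 1)) σ =
    ((p : ℝ) - 1) * (p : ℝ) * (n2 p : ℝ) + (p : ℝ) ^ 2 * (n2 p : ℝ) * (1 - (p : ℝ)) := by
  rw [sum_classes hp5 hcls, range_split hp5 hcls]
  rw [scl_rB hp hp5 hcls hr hsmall hbig 0, scl_rB hp hp5 hcls hr hsmall hbig (p - 1),
    card_cl_small hp hp5 hcls hr hsmall hbig (by omega : 0 < p - 1),
    card_cl_big hp hp5 hcls hr hsmall hbig, if_neg (by omega), if_pos rfl]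
  rw [Finset.sum_congr rfl (fun j hj => by
    rw [scl_rB hp hp5 hcls hr hsmall hbig j,
      card_cl_small hp hp5 hcls hr hsmall hbig (mem_Ioo.mp hj).2,
      if_neg (by have := mem_Ioo.mp hj; omega)])]
  rw [sum_const, Nat.card_Ioo, show p - 1 - 0 - 1 = p - 2 from by omega, nsmul_eq_mul]
  push_cast [show 1 ≤ p by omega, show 2 ≤ p by omega]
  ring

lemma tot_mid {i : ℕ} (hi : 0 < i) (hi' : i < p - 1) :
    ∑ σ, col p cls r (r i) σ = 0 := by
  rw [sum_classes hp5 hcls, range_split hp5 hcls]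
  have h0 : ∑ σ ∈ cl p cls 0, col p cls r (r i) σ = -(p : ℝ) := by
    rw [scl_mid hp hp5 hcls hr hsmall hbig hi hi' 0,
      card_cl_small hp hp5 hcls hr hsmall hbig (by omega : 0 < p - 1),
      if_neg (by omega), if_pos rfl]
    ring
  have hB : ∑ σ ∈ cl p cls (p - 1), col p cls r (r i) σ = 0 := by
    rw [scl_mid hp hp5 hcls hr hsmall hbig hi hi' (p - 1),
      if_neg (by omega), if_neg (by omega), mul_zero]
  have hM : ∀ j ∈ Ioo 0 (p - 1), (∑ σ ∈ cl p cls j, col p cls r (r i) σ)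
      = if j = i then (p : ℝ) else 0 := by
    intro j hj
    have hj' := mem_Ioo.mp hj
    rw [scl_mid hp hp5 hcls hr hsmall hbig hi hi' j,
      card_cl_small hp hp5 hcls hr hsmall hbig hj'.2]
    by_cases h : j = i
    · rw [if_pos h, if_pos h, mul_one]
    · rw [if_neg h, if_neg h, if_neg (by omega), mul_zero]
  rw [Finset.sum_congr rfl hM, Finset.sum_ite_eq' (Ioo 0 (p - 1)) i (fun _ => (p : ℝ)),
    if_pos (mem_Ioo.mpr ⟨hi, hi'⟩), h0, hB]
  ring

lemma tot_nonrep {τ : Equiv.Perm (Fin p)} (h : τ ≠ r (cls τ)) :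
    ∑ σ, col p cls r τ σ = 0 := by
  rw [sum_classes hp5 hcls]
  exact Finset.sum_eq_zero (fun j _ => scl_nonrep hp hp5 hcls hr hsmall hbig h j)

lemma eigen (τ σ : Equiv.Perm (Fin p)) :
    ∑ τ', burnsideMatrix p cls σ τ' * col p cls r τ τ' =
      ev p cls r τ * col p cls r τ σ := by
  have hp0 : (p : ℝ) ≠ 0 := by positivity
  have hp5' : (5 : ℝ) ≤ (p : ℝ) := by exact_mod_cast hp5
  have hp1 : (p : ℝ) - 1 ≠ 0 := by linarith
  have hF2 : ((p - 2).factorial : ℝ) ≠ 0 := by exact_mod_cast (Nat.factorial_pos _).ne'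
  have hpf := factp_real hp5
  have hn2 := n2_real hp hp5
  rw [P_row hp5 σ (col p cls r τ)]
  by_cases hτ0 : τ = r 0
  · subst hτ0
    rw [tot_r0 hp hp5 hcls hr hsmall hbig, ev_r0 hp5 hr, col_r0 hp5 hr σ, mul_one]
    by_cases hσ : cls σ = p - 1
    · rw [if_pos hσ, hpf, hn2]
      field_simp
      ring
    · rw [if_neg hσ, scl_r0 hp hp5 hcls hr hsmall hbig (cls σ),
        card_cl_small hp hp5 hcls hr hsmall hbig (by have := hcls σ; omega), hpf, hn2]
      field_simp
      ring
  · by_cases hτB : τ = r (p - 1)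
    · subst hτB
      rw [tot_rB hp hp5 hcls hr hsmall hbig, ev_rB hp5 hr, col_rB hp5 hr σ]
      by_cases hσ : cls σ = p - 1
      · rw [if_pos hσ, if_pos hσ, hpf, hn2]
        field_simp
        ring
      · rw [if_neg hσ, if_neg hσ, scl_rB hp hp5 hcls hr hsmall hbig (cls σ),
          card_cl_small hp hp5 hcls hr hsmall hbig (by have := hcls σ; omega),
          if_neg hσ, hpf, hn2]
        field_simp
        ring
    · by_cases hrep : τ = r (cls τ)
      · have hi : 0 < cls τ := by
          rcases Nat.eq_zero_or_pos (cls τ) with h0 | h0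
          · rw [h0] at hrep; exact absurd hrep hτ0
          · exact h0
        have hi' : cls τ < p - 1 := by
          have h1 := hcls τ
          rcases Nat.lt_or_ge (cls τ) (p - 1) with h0 | h0
          · exact h0
          · have : cls τ = p - 1 := by omega
            rw [this] at hrep; exact absurd hrep hτB
        rw [show τ = r (cls τ) from hrep]
        rw [tot_mid hp hp5 hcls hr hsmall hbig hi hi', ev_mid hp5 hr hi hi',
          col_mid hp5 hr hi hi' σ]
        by_cases hσ : cls σ = p - 1
        · rw [if_pos hσ, if_neg (by omega : ¬ (cls σ = cls τ)), if_neg (by omega : ¬ (cls σ = 0))]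
          simp
        · rw [if_neg hσ, scl_mid hp hp5 hcls hr hsmall hbig hi hi' (cls σ),
            card_cl_small hp hp5 hcls hr hsmall hbig (by have := hcls σ; omega)]
          field_simp
          ring
      · rw [tot_nonrep hp hp5 hcls hr hsmall hbig hrep, ev_nonrep hp5 hr hrep,
          scl_nonrep hp hp5 hcls hr hsmall hbig hrep (cls σ)]
        simp

lemma ker_triv (c : Equiv.Perm (Fin p) → ℝ)
    (hc : ∀ σ, ∑ τ, col p cls r τ σ * c τ = 0) : c = 0 := by
  have hp0 : (0 : ℝ) < (p : ℝ) := by positivity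
  have hp5' : (5 : ℝ) ≤ (p : ℝ) := by exact_mod_cast hp5
  have hn2r : (1 : ℝ) ≤ (n2 p : ℝ) := by exact_mod_cast n2_pos hp hp5
  -- class-summed equations
  have hE : ∀ j, j < p →
      ∑ i ∈ range p, (∑ σ ∈ cl p cls j, col p cls r (r i) σ) * c (r i) = 0 := by
    intro j hj
    have e1 : ∑ i ∈ range p, (∑ σ ∈ cl p cls j, col p cls r (r i) σ) * c (r i)
        = ∑ τ ∈ (range p).image r, (∑ σ ∈ cl p cls j, col p cls r τ σ) * c τ :=
      (Finset.sum_image (f := fun τ => (∑ σ ∈ cl p cls j, col p cls r τ σ) * c τ) (g := r)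
        (fun a ha b hb hab =>
        rinj hp5 hr (mem_range.mp ha) (mem_range.mp hb) hab)).symm
    have e2 : ∑ τ ∈ (range p).image r, (∑ σ ∈ cl p cls j, col p cls r τ σ) * c τ
        = ∑ τ, (∑ σ ∈ cl p cls j, col p cls r τ σ) * c τ :=
      Finset.sum_subset (subset_univ _) (fun τ _ hτ => by
        have hnr : τ ≠ r (cls τ) := fun hq =>
          hτ (mem_image.mpr ⟨cls τ, mem_range.mpr (by have := hcls τ; omega), hq.symm⟩)
        rw [scl_nonrep hp hp5 hcls hr hsmall hbig hnr j, zero_mul])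
    have e3 : ∑ τ, (∑ σ ∈ cl p cls j, col p cls r τ σ) * c τ = 0 := by
      rw [Finset.sum_congr rfl (fun τ (_ : τ ∈ univ) => Finset.sum_mul _ _ (c τ)),
        Finset.sum_comm]
      exact Finset.sum_eq_zero (fun σ _ => hc σ)
    rw [e1, e2, e3]
  -- the equation from the big class
  have hA : c (r 0) = ((p : ℝ) - 1) * c (r (p - 1)) := by
    have h1 := hE (p - 1) (by omega)
    rw [range_split hp5 hcls] at h1
    rw [scl_r0 hp hp5 hcls hr hsmall hbig (p - 1), scl_rB hp hp5 hcls hr hsmall hbig (p - 1),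
      card_cl_big hp hp5 hcls hr hsmall hbig, if_pos rfl] at h1
    rw [Finset.sum_eq_zero (fun i hi => by
      have hi' := mem_Ioo.mp hi
      rw [scl_mid hp hp5 hcls hr hsmall hbig hi'.1 hi'.2 (p - 1),
        if_neg (by omega), if_neg (by omega), mul_zero, zero_mul])] at h1
    have hB0 : ((p ^ 2 * n2 p : ℕ) : ℝ) ≠ 0 := by
      have h2 := n2_pos hp hp5
      have h3 : 0 < p ^ 2 * n2 p := by positivity
      exact_mod_cast h3.ne'
    have hfac : ((p ^ 2 * n2 p : ℕ) : ℝ) * (c (r 0) - ((p : ℝ) - 1) * c (r (p - 1))) = 0 := by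
      linear_combination h1
    rcases mul_eq_zero.mp hfac with h | h
    · exact absurd h hB0
    · linarith
  -- the middle-class equations
  have hM : ∀ j, 0 < j → j < p - 1 →
      c (r j) = -(c (r 0) + (n2 p : ℝ) * c (r (p - 1))) := by
    intro j hj hj'
    have h1 := hE j (by omega)
    rw [range_split hp5 hcls] at h1
    rw [scl_r0 hp hp5 hcls hr hsmall hbig j, scl_rB hp hp5 hcls hr hsmall hbig j,
      card_cl_small hp hp5 hcls hr hsmall hbig hj', if_neg (by omega)] at h1
    have hmid : ∀ i ∈ Ioo 0 (p - 1),
        (∑ σ ∈ cl p cls j, col p cls r (r i) σ) * c (r i)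
          = if j = i then ((p : ℕ) : ℝ) * c (r i) else 0 := by
      intro i hi
      have hi' := mem_Ioo.mp hi
      rw [scl_mid hp hp5 hcls hr hsmall hbig hi'.1 hi'.2 j,
        card_cl_small hp hp5 hcls hr hsmall hbig hj']
      by_cases h : j = i
      · rw [if_pos h, if_pos h]; ring
      · rw [if_neg h, if_neg h, if_neg (by omega)]; ring
    rw [Finset.sum_congr rfl hmid,
      Finset.sum_ite_eq (Ioo 0 (p - 1)) j (fun i => ((p : ℕ) : ℝ) * c (r i)),
      if_pos (mem_Ioo.mpr ⟨hj, hj'⟩)] at h1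
    have hpne : ((p : ℕ) : ℝ) ≠ 0 := by positivity
    have hfac : ((p : ℕ) : ℝ) * (c (r j) + (c (r 0) + (n2 p : ℝ) * c (r (p - 1)))) = 0 := by
      linear_combination h1
    rcases mul_eq_zero.mp hfac with h | h
    · exact absurd h hpne
    · linarith
  -- the j = 0 equation
  have h0 := hE 0 (by omega)
  rw [range_split hp5 hcls] at h0
  rw [scl_r0 hp hp5 hcls hr hsmall hbig 0, scl_rB hp hp5 hcls hr hsmall hbig 0,
    card_cl_small hp hp5 hcls hr hsmall hbig (by omega), if_neg (by omega)] at h0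
  have hmid0 : ∀ i ∈ Ioo 0 (p - 1),
      (∑ σ ∈ cl p cls 0, col p cls r (r i) σ) * c (r i)
        = ((p : ℕ) : ℝ) * (c (r 0) + (n2 p : ℝ) * c (r (p - 1))) := by
    intro i hi
    have hi' := mem_Ioo.mp hi
    rw [scl_mid hp hp5 hcls hr hsmall hbig hi'.1 hi'.2 0,
      card_cl_small hp hp5 hcls hr hsmall hbig (by omega), if_neg (by omega), if_pos rfl,
      hM i hi'.1 hi'.2]
    ring
  rw [Finset.sum_congr rfl hmid0] at h0
  rw [Finset.sum_const, Nat.card_Ioo, show p - 1 - 0 - 1 = p - 2 from by omega,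
    nsmul_eq_mul] at h0
  have hs : c (r 0) + (n2 p : ℝ) * c (r (p - 1)) = 0 := by
    have hc2 : ((p - 2 : ℕ) : ℝ) = (p : ℝ) - 2 := by
      push_cast [show 2 ≤ p by omega]; ring
    rw [hc2] at h0
    have hfac : ((p : ℝ) * ((p : ℝ) - 1)) * (c (r 0) + (n2 p : ℝ) * c (r (p - 1))) = 0 := by
      linear_combination h0
    have hne : (p : ℝ) * ((p : ℝ) - 1) ≠ 0 := by
      have : (0:ℝ) < (p : ℝ) * ((p : ℝ) - 1) := by nlinarith
      exact this.ne'
    rcases mul_eq_zero.mp hfac with h | h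
    · exact absurd h hne
    · exact h
  have hB : c (r (p - 1)) = 0 := by
    rw [hA] at hs
    have hfac : (((p : ℝ) - 1) + (n2 p : ℝ)) * c (r (p - 1)) = 0 := by
      linear_combination hs
    have hne : ((p : ℝ) - 1) + (n2 p : ℝ) ≠ 0 := by
      have : (0:ℝ) < ((p : ℝ) - 1) + (n2 p : ℝ) := by linarith
      exact this.ne'
    rcases mul_eq_zero.mp hfac with h | h
    · exact absurd h hne
    · exact h
  have h00 : c (r 0) = 0 := by rw [hA, hB, mul_zero]
  have hs0 : ∀ j, j < p → c (r j) = 0 := by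
    intro j hj
    rcases Nat.eq_zero_or_pos j with h | h
    · rw [h]; exact h00
    rcases Nat.lt_or_ge j (p - 1) with h' | h'
    · rw [hM j h h']
      rw [h00, hB, mul_zero, add_zero, neg_zero]
    · rw [show j = p - 1 from by omega]; exact hB
  have hrepz : ∀ τ, τ = r (cls τ) → c τ = 0 := by
    intro τ h
    rw [h]; exact hs0 (cls τ) (by have := hcls τ; omega)
  funext τ
  show c τ = 0
  by_cases hnr : τ = r (cls τ)
  · exact hrepz τ hnr
  · have key : ∀ τ' ∈ (univ : Finset (Equiv.Perm (Fin p))),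
        col p cls r τ' τ * c τ' = if τ' = τ then c τ' else 0 := by
      intro τ' _
      by_cases h' : τ' = r (cls τ')
      · simp [hrepz τ' h']
      · rw [col_nonrep hp5 hr h' τ]
        have h2 : τ ≠ r (cls τ') := by
          intro hq
          have : cls τ = cls τ' := by rw [hq, hr (cls τ') (by have := hcls τ'; omega)]
          exact hnr (by rw [this, ← hq])
        rw [if_neg h2, sub_zero]
        by_cases h3 : τ = τ'
        · rw [if_pos h3, if_pos h3.symm, one_mul]
        · rw [if_neg h3, if_neg (fun q => h3 q.symm), zero_mul]
    have := hc τ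
    rw [Finset.sum_congr rfl key, Finset.sum_ite_eq' univ τ c, if_pos (mem_univ τ)] at this
    exact this

lemma ev_multiset :
    (Finset.univ.val.map (ev p cls r)) =
      {(1 : ℝ)} + Multiset.replicate (p - 2) (1 - 1 / (p : ℝ)) +
        {1 - 1 / (p : ℝ) - ((p : ℝ) - 1) / ((p : ℝ) * ((p - 2).factorial : ℝ))} +
        Multiset.replicate (p.factorial - p) 0 := by
  classical
  set R : Finset (Equiv.Perm (Fin p)) := (range p).image r with hR
  have hinj : Set.InjOn r ↑(range p) := fun a ha b hb hab =>
    rinj hp5 hr (mem_range.mp ha) (mem_range.mp hb) hab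
  have hRcard : R.card = p := by
    rw [hR, Finset.card_image_of_injOn hinj, Finset.card_range]
  have hsub : R ⊆ univ := subset_univ R
  have hcardu : (univ : Finset (Equiv.Perm (Fin p))).card = p.factorial := by
    rw [Finset.card_univ, Fintype.card_perm, Fintype.card_fin]
  have hsplit : (univ : Finset (Equiv.Perm (Fin p))).val = (univ \ R).val + R.val := by
    rw [Finset.sdiff_val, tsub_add_cancel_of_le (Finset.val_le_iff.mpr hsub)]
  rw [hsplit, Multiset.map_add]
  have hnon : Multiset.map (ev p cls r) (univ \ R).val
      = Multiset.replicate (p.factorial - p) 0 := by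
    rw [Multiset.eq_replicate]
    constructor
    · rw [Multiset.card_map, ← Finset.card_def, Finset.card_sdiff_of_subset hsub, hcardu, hRcard]
    · intro b hb
      obtain ⟨τ, hτ, hbe⟩ := Multiset.mem_map.mp hb
      have hτ' : τ ∉ R := (Finset.mem_sdiff.mp hτ).2
      have hnr : τ ≠ r (cls τ) := fun hq =>
        hτ' (Finset.mem_image.mpr ⟨cls τ, mem_range.mpr (by have := hcls τ; omega), hq.symm⟩)
      rw [← hbe, ev_nonrep hp5 hr hnr]
  have hrep : Multiset.map (ev p cls r) R.val
      = 1 ::ₘ (1 - 1 / (p : ℝ) - ((p : ℝ) - 1) / ((p : ℝ) * ((p - 2).factorial : ℝ))) ::ₘ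
        Multiset.replicate (p - 2) (1 - 1 / (p : ℝ)) := by
    rw [hR, Finset.image_val_of_injOn hinj, Multiset.map_map]
    have he : range p = insert 0 (insert (p - 1) (Ioo 0 (p - 1))) := by
      ext x; simp only [mem_range, mem_insert, mem_Ioo]; omega
    rw [he, Finset.insert_val_of_notMem (by simp only [mem_insert, mem_Ioo]; omega),
      Finset.insert_val_of_notMem (by simp only [mem_Ioo]; omega),
      Multiset.map_cons, Multiset.map_cons]
    rw [show (ev p cls r ∘ r) 0 = 1 from ev_r0 hp5 hr]
    rw [show (ev p cls r ∘ r) (p - 1)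
        = 1 - 1 / (p : ℝ) - ((p : ℝ) - 1) / ((p : ℝ) * ((p - 2).factorial : ℝ)) from
      ev_rB hp5 hr]
    congr 2
    rw [Multiset.eq_replicate]
    constructor
    · rw [Multiset.card_map, ← Finset.card_def, Nat.card_Ioo]; omega
    · intro b hb
      obtain ⟨i, hi, hbe⟩ := Multiset.mem_map.mp hb
      have hi' : i ∈ Ioo 0 (p - 1) := hi
      have hio := mem_Ioo.mp hi'
      rw [← hbe]
      exact ev_mid hp5 hr hio.1 hio.2
  rw [hnon, hrep]
  simp only [← Multiset.singleton_add]
  abel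

end
end B17

/-- With `n₁ = p − 1` small classes of size `p` and a large set of size `p² n₂`,
`n₂ = ((p−1)! − (p−1))/p`, the matrix `P` is diagonalizable with eigenvalues exactly
`1`, `1 − 1/p`, `1 − 1/p − (p−1)/(p(p−2)!)` and `0`, with multiplicities
`1`, `n₁ − 1`, `1` and `p! − n₁ − 1` respectively. -/
theorem stmt_17 (p : ℕ) (hp : p.Prime) (hp5 : 5 ≤ p)
    (cls : Equiv.Perm (Fin p) → ℕ) (hcls : ∀ σ, cls σ ≤ p - 1)
    (hsmall : ∀ i < p - 1, (Finset.univ.filter (fun σ => cls σ = i)).card = p)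
    (hbig : (Finset.univ.filter (fun σ : Equiv.Perm (Fin p) => cls σ = p - 1)).card =
      p ^ 2 * (((p - 1).factorial - (p - 1)) / p)) :
    ∃ S D : Matrix (Equiv.Perm (Fin p)) (Equiv.Perm (Fin p)) ℝ,
      IsUnit S.det ∧ burnsideMatrix p cls = S * D * S⁻¹ ∧ D.IsDiag ∧
      (Finset.univ.val.map fun σ => D σ σ) =
        {(1 : ℝ)} + Multiset.replicate (p - 2) (1 - 1 / (p : ℝ)) +
          {1 - 1 / (p : ℝ) - ((p : ℝ) - 1) / ((p : ℝ) * ((p - 2).factorial : ℝ))} +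
          Multiset.replicate (p.factorial - p) 0 := by
  classical
  obtain ⟨r, hr⟩ : ∃ r : ℕ → Equiv.Perm (Fin p), ∀ j < p, cls (r j) = j := by
    have hex : ∀ j : ℕ, ∃ σ : Equiv.Perm (Fin p), j < p → cls σ = j := by
      intro j
      by_cases hj : j < p
      · have hne : (Finset.univ.filter (fun σ => cls σ = j)).Nonempty := by
          rw [← Finset.card_pos]
          rcases Nat.lt_or_ge j (p - 1) with h | h
          · rw [hsmall j h]; omega
          · have hj' : j = p - 1 := by omega
            rw [hj', hbig]
            have h2 := B17.n2_pos hp hp5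
            exact Nat.mul_pos (pow_pos (by omega) 2) h2
        obtain ⟨σ, hσ⟩ := hne
        exact ⟨σ, fun _ => (Finset.mem_filter.mp hσ).2⟩
      · exact ⟨1, fun h => absurd h hj⟩
    choose r hr using hex
    exact ⟨r, hr⟩
  set S : Matrix (Equiv.Perm (Fin p)) (Equiv.Perm (Fin p)) ℝ :=
    Matrix.of (fun σ τ => B17.col p cls r τ σ) with hS
  set D : Matrix (Equiv.Perm (Fin p)) (Equiv.Perm (Fin p)) ℝ :=
    Matrix.diagonal (B17.ev p cls r) with hD
  have hdet : S.det ≠ 0 := by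
    intro h
    obtain ⟨v, hv0, hv⟩ := Matrix.exists_mulVec_eq_zero_iff.mpr h
    apply hv0
    apply B17.ker_triv hp hp5 hcls hr hsmall hbig v
    intro σ
    have h2 := congrFun hv σ
    simpa [Matrix.mulVec, dotProduct, hS] using h2
  have hu : IsUnit S.det := isUnit_iff_ne_zero.mpr hdet
  have hPS : burnsideMatrix p cls * S = S * D := by
    ext σ τ
    rw [hD, Matrix.mul_diagonal, Matrix.mul_apply]
    simp only [hS, Matrix.of_apply]
    rw [B17.eigen hp hp5 hcls hr hsmall hbig τ σ]
    ring
  refine ⟨S, D, hu, ?_, hD ▸ Matrix.isDiag_diagonal _, ?_⟩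
  · calc burnsideMatrix p cls = burnsideMatrix p cls * (S * S⁻¹) := by
          rw [Matrix.mul_nonsing_inv S hu, mul_one]
      _ = (burnsideMatrix p cls * S) * S⁻¹ := by rw [mul_assoc]
      _ = S * D * S⁻¹ := by rw [hPS]
  · have hdiag : ∀ σ, D σ σ = B17.ev p cls r σ := by
      intro σ; rw [hD, Matrix.diagonal_apply_eq]
    rw [show (Finset.univ.val.map fun σ => D σ σ)
        = Finset.univ.val.map (B17.ev p cls r) from Multiset.map_congr rfl (fun σ _ => hdiag σ)]
    exact B17.ev_multiset hp hp5 hcls hr hsmall hbig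
end

section
/- Let G be a finite group acting on a finite set X, with Z orbits. Consider the bipartite graph on X ⊔ G where x ∈ X is joined to g ∈ G iff x^g = x. Then the stationary distribution of the two-step random walk on X (from x choose a uniform neighbor g in G, then from g choose a uniform neighbor y in X) is π(x) = 1/(Z·|O_x|), where O_x is the orbit of x; in particular Σ_x π(x) = 1 follows from Burnside's lemma |{(x,g) : x^g = x}| = Z·|G|. -/
/-!
Weighting `x` by `|G_x|` makes the kernel symmetric: `|G_x| P(x,y) = Σ_{g ∈ G_x ∩ G_y} 1/|X^g|`.
By orbit–stabilizer `1/(Z|O_x|) = |G_x|/(Z|G|)`, so `π` satisfies detailed balance, and since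
every row of `P` sums to `1` it is stationary. The total mass `Σ_x |G_x|` counts the pairs
`(x, g)` with `x^g = x`, which Burnside's lemma evaluates to `Z|G|`.
-/

open Finset

/-- The Burnside process kernel
`P(x,y) = (1/|G_x|) Σ_{g ∈ G_x ∩ G_y} 1/|X^g|`. -/
noncomputable def burnsideKernel (G : Type*) [Group G] [Fintype G]
    {X : Type*} [Fintype X] [DecidableEq X] [MulAction G X] (x y : X) : ℝ :=
  (1 / (Nat.card (MulAction.stabilizer G x) : ℝ)) *
    ∑ g ∈ Finset.univ.filter (fun g : G => g • x = x ∧ g • y = y),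
      1 / ((Finset.univ.filter (fun z : X => g • z = z)).card : ℝ)

namespace MulAction

variable (G : Type*) {X : Type*} [Group G] [MulAction G X]

theorem nat_card_fixedPoints_eq_card_orbits_mul_card_group :
    Nat.card {xg : X × G // xg.2 • xg.1 = xg.1} =
      Nat.card (orbitRel.Quotient G X) * Nat.card G := by
  rw [← Nat.card_prod, ← Nat.card_congr (sigmaFixedByEquivOrbitsProdGroup G X)]
  exact Nat.card_congr (((Equiv.prodComm X G).subtypeEquiv fun _ => Iff.rfl).trans
    (Equiv.subtypeProdEquivSigmaSubtype fun (g : G) (x : X) => g • x = x))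

theorem sum_card_stabilizer_eq_nat_card_fixedPoints [Fintype X] [Finite G] :
    ∑ x : X, Nat.card (stabilizer G x) = Nat.card {xg : X × G // xg.2 • xg.1 = xg.1} := by
  rw [Nat.card_congr (Equiv.subtypeProdEquivSigmaSubtype fun (x : X) (g : G) => g • x = x),
    Nat.card_sigma]
  rfl

theorem nat_card_orbit_mul_card_stabilizer (x : X) :
    Nat.card (orbit G x) * Nat.card (stabilizer G x) = Nat.card G := by
  rw [← Nat.card_prod, Nat.card_congr (orbitProdStabilizerEquivGroup G x)]

theorem card_filter_smul_eq_self_eq_nat_card_stabilizer [Fintype G] [DecidableEq X] (x : X) :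
    (univ.filter (fun g : G => g • x = x)).card = Nat.card (stabilizer G x) := by
  rw [Nat.card_eq_fintype_card, ← Fintype.card_subtype]
  rfl

end MulAction

open MulAction

noncomputable def burnsideStationaryDist (G : Type*) [Group G] {X : Type*} [MulAction G X]
    (x : X) : ℝ :=
  1 / ((Nat.card (Quotient (orbitRel G X)) : ℝ) * (Nat.card (orbit G x) : ℝ))

section Kernel

variable {G : Type*} [Group G] {X : Type*} [MulAction G X]

theorem burnsideStationaryDist_eq [Finite G] (x : X) :
    burnsideStationaryDist G x =
      Nat.card (stabilizer G x) / ((Nat.card (Quotient (orbitRel G X)) : ℝ) * Nat.card G) := by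
  have hstab : (Nat.card (stabilizer G x) : ℝ) ≠ 0 := by exact_mod_cast Nat.card_pos.ne'
  rw [burnsideStationaryDist, ← nat_card_orbit_mul_card_stabilizer G x, Nat.cast_mul, ← mul_assoc,
    div_mul_cancel_right₀ hstab, one_div]

theorem sum_burnsideStationaryDist [Fintype X] [Nonempty X] [Finite G] :
    ∑ x : X, burnsideStationaryDist G x = 1 := by
  have : Nonempty (Quotient (orbitRel G X)) := ⟨Quotient.mk _ (Classical.arbitrary X)⟩
  have hZG : ((Nat.card (Quotient (orbitRel G X)) : ℝ) * Nat.card G) ≠ 0 := by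
    exact_mod_cast (Nat.mul_pos Nat.card_pos Nat.card_pos).ne'
  simp_rw [burnsideStationaryDist_eq, ← sum_div]
  rw [div_eq_one_iff_eq hZG]
  exact_mod_cast (sum_card_stabilizer_eq_nat_card_fixedPoints G).trans
    (nat_card_fixedPoints_eq_card_orbits_mul_card_group G)

variable [Fintype X] [DecidableEq X]

theorem sum_inv_card_fixedPoints {g : G} {x : X} (hx : g • x = x) :
    ∑ _z ∈ univ.filter (fun z : X => g • z = z),
      1 / ((univ.filter (fun z : X => g • z = z)).card : ℝ) = 1 := by
  have hpos : 0 < (univ.filter (fun z : X => g • z = z)).card := card_pos.mpr ⟨x, by simp [hx]⟩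
  rw [sum_const, nsmul_eq_mul, mul_one_div_cancel (by exact_mod_cast hpos.ne')]

variable [Fintype G]

theorem sum_burnsideKernel (x : X) : ∑ y : X, burnsideKernel G x y = 1 := by
  have hstab : (Nat.card (stabilizer G x) : ℝ) ≠ 0 := by exact_mod_cast Nat.card_pos.ne'
  have hswap : ∑ y : X, ∑ g ∈ univ.filter (fun g : G => g • x = x ∧ g • y = y),
      1 / ((univ.filter (fun z : X => g • z = z)).card : ℝ) =
      ∑ g ∈ univ.filter (fun g : G => g • x = x), ∑ y ∈ univ.filter (fun z : X => g • z = z),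
        1 / ((univ.filter (fun z : X => g • z = z)).card : ℝ) :=
    sum_comm' fun _ _ => by simp only [mem_univ, mem_filter, true_and]; exact and_comm
  simp only [burnsideKernel, ← mul_sum, hswap]
  rw [sum_congr rfl fun g hg => sum_inv_card_fixedPoints (mem_filter.mp hg).2, sum_const,
    nsmul_one, card_filter_smul_eq_self_eq_nat_card_stabilizer, one_div_mul_cancel hstab]

theorem card_stabilizer_mul_burnsideKernel (x y : X) :
    Nat.card (stabilizer G x) * burnsideKernel G x y =
      ∑ g ∈ univ.filter (fun g : G => g • x = x ∧ g • y = y),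
        1 / ((univ.filter (fun z : X => g • z = z)).card : ℝ) := by
  have hstab : (Nat.card (stabilizer G x) : ℝ) ≠ 0 := by exact_mod_cast Nat.card_pos.ne'
  rw [burnsideKernel, ← mul_assoc, mul_one_div_cancel hstab, one_mul]

theorem card_stabilizer_mul_burnsideKernel_comm (x y : X) :
    Nat.card (stabilizer G x) * burnsideKernel G x y =
      Nat.card (stabilizer G y) * burnsideKernel G y x := by
  simp only [card_stabilizer_mul_burnsideKernel, and_comm]

theorem burnsideStationaryDist_mul_burnsideKernel_comm (x y : X) :
    burnsideStationaryDist G x * burnsideKernel G x y =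
      burnsideStationaryDist G y * burnsideKernel G y x := by
  simp only [burnsideStationaryDist_eq, div_mul_eq_mul_div,
    card_stabilizer_mul_burnsideKernel_comm x y]

theorem sum_burnsideStationaryDist_mul_burnsideKernel (y : X) :
    ∑ x : X, burnsideStationaryDist G x * burnsideKernel G x y = burnsideStationaryDist G y := by
  simp only [burnsideStationaryDist_mul_burnsideKernel_comm _ y, ← mul_sum, sum_burnsideKernel,
    mul_one]

end Kernel

/-- The distribution `π(x) = 1/(Z·|O_x|)` (with `Z` the number of orbits) is a probability
distribution and is stationary for the Burnside process; moreover Burnside's lemma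
`|{(x,g) : x^g = x}| = Z·|G|` holds. -/
theorem stmt_19 (G : Type*) [Group G] [Fintype G]
    (X : Type*) [Fintype X] [DecidableEq X] [Nonempty X] [MulAction G X] :
    (∑ x : X, 1 / ((Nat.card (Quotient (MulAction.orbitRel G X)) : ℝ) *
        (Nat.card (MulAction.orbit G x) : ℝ)) = 1) ∧
    (∀ y : X,
      ∑ x : X, (1 / ((Nat.card (Quotient (MulAction.orbitRel G X)) : ℝ) *
          (Nat.card (MulAction.orbit G x) : ℝ))) * burnsideKernel G x y =
        1 / ((Nat.card (Quotient (MulAction.orbitRel G X)) : ℝ) *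
          (Nat.card (MulAction.orbit G y) : ℝ))) ∧
    Nat.card {xg : X × G // xg.2 • xg.1 = xg.1} =
      Nat.card (Quotient (MulAction.orbitRel G X)) * Nat.card G :=
  ⟨sum_burnsideStationaryDist, sum_burnsideStationaryDist_mul_burnsideKernel,
    nat_card_fixedPoints_eq_card_orbits_mul_card_group G⟩
end
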